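/- arXiv:1306.4354 — 5 statements merged into one kernel-verified Lean document; each statement's English description precedes it below -/
import Mathlib

section
/- Let V be an n-dimensional real vector space and suppose T ∈ ⊗^{p-3}V* ⊗ S³V* ⊗ S²V* ⊗ S²V*, i.e. T is symmetric in the arguments j₁,j₂,j₃, symmetric in a,b, and symmetric in c,d, and suppose T satisfies both (i) the cyclic identity T(...,j₁,j₂,j₃; a,b,c,d) + T(...,j₁,j₂,d; a,b,j₃,c) + T(...,j₁,j₂,c; a,b,d,j₃) = 0, and (ii) the interchange symmetry T(...,j₁,j₂,j₃; a,b,c,d) = T(...,c,d,j₃; a,b,j₁,j₂). Then T = 0. -/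
/-- Let `T` be a tensor with components
`T s j₁ j₂ j₃ a b c d` (with `s` a group of spectator indices), totally
symmetric in `j₁, j₂, j₃`, symmetric in `a, b` and in `c, d`.  If `T` satisfies
the cyclic identity (i) coming from the divergence-free condition and the
pair-interchange symmetry (ii) between `(j₁, j₂)` and `(c, d)`, then `T = 0`. -/
theorem symmetric_three_indices_div_free_is_zero
    {ι σ : Type*} (T : σ → ι → ι → ι → ι → ι → ι → ι → ℝ)
    (hj₁₂ : ∀ s j₁ j₂ j₃ a b c d, T s j₁ j₂ j₃ a b c d = T s j₂ j₁ j₃ a b c d)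
    (hj₂₃ : ∀ s j₁ j₂ j₃ a b c d, T s j₁ j₂ j₃ a b c d = T s j₁ j₃ j₂ a b c d)
    (hab : ∀ s j₁ j₂ j₃ a b c d, T s j₁ j₂ j₃ a b c d = T s j₁ j₂ j₃ b a c d)
    (hcd : ∀ s j₁ j₂ j₃ a b c d, T s j₁ j₂ j₃ a b c d = T s j₁ j₂ j₃ a b d c)
    (hcyc : ∀ s j₁ j₂ j₃ a b c d,
      T s j₁ j₂ j₃ a b c d + T s j₁ j₂ d a b j₃ c + T s j₁ j₂ c a b d j₃ = 0)
    (hint : ∀ s j₁ j₂ j₃ a b c d,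
      T s j₁ j₂ j₃ a b c d = T s c d j₃ a b j₁ j₂) :
    ∀ s j₁ j₂ j₃ a b c d, T s j₁ j₂ j₃ a b c d = 0 := by
  intro s j₁ j₂ j₃ a b c d
  have h1 : T s j₁ j₂ j₃ a b c d = T s j₁ j₂ d a b j₃ c := by
    calc T s j₁ j₂ j₃ a b c d = T s c d j₃ a b j₁ j₂ := hint ..
      _ = T s c j₃ d a b j₁ j₂ := hj₂₃ ..
      _ = T s j₃ c d a b j₁ j₂ := hj₁₂ ..
      _ = T s j₁ j₂ d a b j₃ c := (hint s j₁ j₂ d a b j₃ c).symm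
  have h2 : T s j₁ j₂ j₃ a b c d = T s j₁ j₂ c a b d j₃ := by
    calc T s j₁ j₂ j₃ a b c d = T s j₁ j₂ j₃ a b d c := hcd ..
      _ = T s d c j₃ a b j₁ j₂ := hint ..
      _ = T s d j₃ c a b j₁ j₂ := hj₂₃ ..
      _ = T s j₁ j₂ c a b d j₃ := (hint s j₁ j₂ c a b d j₃).symm
  have h3 := hcyc s j₁ j₂ j₃ a b c d
  linarith
end

section
/- Let T be a multilinear form on a real vector space with argument groups including three arguments j₁, j₂, j₃ in which T is totally symmetric, and suppose T satisfies the cyclic identity T(j₁,j₂,j₃; c,d, ...) + T(j₁,j₂,d; j₃,c, ...) + T(j₁,j₂,c; d,j₃, ...) = 0 where the semicolon separates a pair (c,d) in which T is symmetric. Then 3·T(j₁,j₂,j₃; c,d,...) equals the sum of three terms obtained by the interchange symmetry, and if additionally T is invariant under interchanging the pair (j₁,j₂) with the pair (c,d), then T = 0. -/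
/-!
Combining the interchange symmetry `(j₁,j₂) ↔ (c,d)` with the total symmetry of `(j₁,j₂,j₃)`
makes `T` invariant under cyclic rotations of `(j₃,c,d)`, so all three terms of the cyclic
identity coincide and it reads `3 T = 0`.
-/

section

variable {ι σ : Type*} {T : ι → ι → ι → ι → ι → σ → ℝ}

theorem rotate_first_three
    (h₁₂ : ∀ j₁ j₂ j₃ c d r, T j₁ j₂ j₃ c d r = T j₂ j₁ j₃ c d r)
    (h₂₃ : ∀ j₁ j₂ j₃ c d r, T j₁ j₂ j₃ c d r = T j₁ j₃ j₂ c d r)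
    (j₁ j₂ j₃ c d : ι) (r : σ) :
    T j₁ j₂ j₃ c d r = T j₃ j₁ j₂ c d r := by
  rw [h₂₃, h₁₂]

theorem rotate_last_three
    (h₁₂ : ∀ j₁ j₂ j₃ c d r, T j₁ j₂ j₃ c d r = T j₂ j₁ j₃ c d r)
    (h₂₃ : ∀ j₁ j₂ j₃ c d r, T j₁ j₂ j₃ c d r = T j₁ j₃ j₂ c d r)
    (hswap : ∀ j₁ j₂ j₃ c d r, T j₁ j₂ j₃ c d r = T c d j₃ j₁ j₂ r)
    (a b x y z : ι) (r : σ) :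
    T a b z x y r = T a b x y z r := by
  rw [hswap a b z x y, rotate_first_three h₁₂ h₂₃, rotate_first_three h₁₂ h₂₃, ← hswap]

end

theorem three_symmetric_indices_identity_general
    {ι σ : Type*} (T : ι → ι → ι → ι → ι → σ → ℝ)
    (hj₁₂ : ∀ j₁ j₂ j₃ c d r, T j₁ j₂ j₃ c d r = T j₂ j₁ j₃ c d r)
    (hj₂₃ : ∀ j₁ j₂ j₃ c d r, T j₁ j₂ j₃ c d r = T j₁ j₃ j₂ c d r)
    (hcyc : ∀ j₁ j₂ j₃ c d r,
      T j₁ j₂ j₃ c d r + T j₁ j₂ d j₃ c r + T j₁ j₂ c d j₃ r = 0) :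
    (∀ j₁ j₂ j₃ c d r,
      (∀ j₁' j₂' j₃' c' d' r', T j₁' j₂' j₃' c' d' r' = T c' d' j₃' j₁' j₂' r') →
        3 * T j₁ j₂ j₃ c d r =
          T c d j₃ j₁ j₂ r + T c d j₂ j₃ j₁ r + T c d j₁ j₂ j₃ r) ∧
    ((∀ j₁ j₂ j₃ c d r, T j₁ j₂ j₃ c d r = T c d j₃ j₁ j₂ r) →
      ∀ j₁ j₂ j₃ c d r, T j₁ j₂ j₃ c d r = 0) := by
  have hrot := rotate_first_three hj₁₂ hj₂₃
  constructor
  · intro j₁ j₂ j₃ c d r hswap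
    rw [← hswap j₁ j₂ j₃, ← hswap j₃ j₁ j₂, ← hswap j₂ j₃ j₁, ← hrot j₁ j₂ j₃, ← hrot j₂ j₃ j₁]
    ring
  · intro hswap j₁ j₂ j₃ c d r
    have hrotLast := rotate_last_three hj₁₂ hj₂₃ hswap j₁ j₂
    have hsum := hcyc j₁ j₂ j₃ c d r
    rw [hrotLast j₃ c d, ← hrotLast c d j₃] at hsum
    linarith

/-- Let `T` be a tensor with components `T j₁ j₂ j₃ c d r`
(with `r` a group of spectator indices), totally symmetric in `j₁, j₂, j₃` and
symmetric in the pair `c, d`, satisfying the cyclic identity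
`T(j₁,j₂,j₃;c,d) + T(j₁,j₂,d;j₃,c) + T(j₁,j₂,c;d,j₃) = 0`.
Then `3·T(j₁,j₂,j₃;c,d)` equals the sum of the three terms obtained by the
interchange symmetry, and if moreover `T` is invariant under interchanging the
pair `(j₁,j₂)` with the pair `(c,d)`, then `T = 0`. -/
theorem three_symmetric_indices_identity
    {ι σ : Type*} (T : ι → ι → ι → ι → ι → σ → ℝ)
    (hj₁₂ : ∀ j₁ j₂ j₃ c d r, T j₁ j₂ j₃ c d r = T j₂ j₁ j₃ c d r)
    (hj₂₃ : ∀ j₁ j₂ j₃ c d r, T j₁ j₂ j₃ c d r = T j₁ j₃ j₂ c d r)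
    (hcd : ∀ j₁ j₂ j₃ c d r, T j₁ j₂ j₃ c d r = T j₁ j₂ j₃ d c r)
    (hcyc : ∀ j₁ j₂ j₃ c d r,
      T j₁ j₂ j₃ c d r + T j₁ j₂ d j₃ c r + T j₁ j₂ c d j₃ r = 0) :
    (∀ j₁ j₂ j₃ c d r,
      (∀ j₁' j₂' j₃' c' d' r', T j₁' j₂' j₃' c' d' r' = T c' d' j₃' j₁' j₂' r') →
        3 * T j₁ j₂ j₃ c d r =
          T c d j₃ j₁ j₂ r + T c d j₂ j₃ j₁ r + T c d j₁ j₂ j₃ r) ∧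
    ((∀ j₁ j₂ j₃ c d r, T j₁ j₂ j₃ c d r = T c d j₃ j₁ j₂ r) →
      ∀ j₁ j₂ j₃ c d r, T j₁ j₂ j₃ c d r = 0) :=
  three_symmetric_indices_identity_general T hj₁₂ hj₂₃ hcyc
end

section
/- Let (V, g) be a finite-dimensional real vector space with a nondegenerate symmetric bilinear form, and O(g) its orthogonal group. For every p ≥ 1, the space of O(g)-invariant elements of Λ^p V is zero. -/
/-!
Take a `g`-orthogonal basis `b` and let `sᵢ` be the reflection `b i ↦ -b i` fixing the other
basis vectors; it preserves `g`. On the basis `e_S` of `⋀^p V` indexed by `p`-subsets `S`,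
`⋀^p sᵢ` is diagonal with eigenvalue `-1` exactly when `i ∈ S`. Since `p ≥ 1` every `S` contains
some `i`, and invariance under `sᵢ` forces the `e_S`-coordinate of `ω` to equal its negative.
-/

open Module Set

namespace Module.Basis

variable {R M N I : Type*} [CommRing R] [AddCommGroup M] [Module R M] [AddCommGroup N] [Module R N]

noncomputable def reflection (b : Basis I R M) (i : I) : M ≃ₗ[R] M :=
  Module.reflection (x := b i) (f := 2 • b.coord i) (by simp)

variable [DecidableEq I]

lemma reflection_apply_basis (b : Basis I R M) (i j : I) :
    b.reflection i (b j) = (if j = i then -1 else 1 : R) • b j := by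
  rcases eq_or_ne j i with rfl | hji
  · simp [reflection]
  · simp [reflection, Module.reflection_apply, hji, Ne.symm hji]

lemma _root_.LinearMap.IsOrthoᵢ.apply_reflection_apply_reflection {B : M →ₗ[R] M →ₗ[R] N}
    {b : Basis I R M} (hB : B.IsOrthoᵢ b) (i : I) (v w : M) :
    B (b.reflection i v) (b.reflection i w) = B v w := by
  have : B.compl₁₂ (b.reflection i).toLinearMap (b.reflection i).toLinearMap = B := by
    refine LinearMap.ext_basis b b fun j k => ?_
    simp only [LinearMap.compl₁₂_apply, LinearEquiv.coe_coe, reflection_apply_basis,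
      map_smul, LinearMap.smul_apply]
    rcases eq_or_ne j k with rfl | hjk
    · split_ifs <;> simp
    · simp [hB hjk]
  exact LinearMap.congr_fun₂ this v w

end Module.Basis

namespace exteriorPower

variable {R M N I : Type*} [CommRing R] [AddCommGroup M] [Module R M] [AddCommGroup N] [Module R N]

lemma coe_map (n : ℕ) (f : M →ₗ[R] N) (x : ⋀[R]^n M) :
    (map n f x : ExteriorAlgebra R N) = ExteriorAlgebra.map f x := by
  have : (⋀[R]^n N).subtype ∘ₗ map n f =
      (ExteriorAlgebra.map f).toLinearMap ∘ₗ (⋀[R]^n M).subtype := by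
    ext v
    simp [ExteriorAlgebra.map_apply_ιMulti]
  exact LinearMap.congr_fun this x

variable [LinearOrder I] {n : ℕ}

lemma map_ιMulti_family_of_apply_eq_smul {v : I → M} {f : M →ₗ[R] M} {d : I → R}
    (hf : ∀ i, f (v i) = d i • v i) (s : powersetCard I n) :
    map n f (ιMulti_family R n v s) = (∏ i ∈ s.val, d i) • ιMulti_family R n v s := by
  rw [map_apply_ιMulti_family, show f ∘ v = fun i => d i • v i from funext hf]
  simp only [ιMulti_family, Function.comp_def, AlternatingMap.map_smul_univ]
  rw [← Finset.map_orderEmbOfFin_univ s.val s.prop, Finset.prod_map]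
  rfl

lemma basis_repr_map_of_apply_eq_smul (b : Basis I R M) {f : M →ₗ[R] M} {d : I → R}
    (hf : ∀ i, f (b i) = d i • b i) (x : ⋀[R]^n M) (s : powersetCard I n) :
    (b.exteriorPower n).repr (map n f x) s =
      (∏ i ∈ s.val, d i) * (b.exteriorPower n).repr x s := by
  have : (b.exteriorPower n).coord s ∘ₗ map n f =
      (∏ i ∈ s.val, d i) • (b.exteriorPower n).coord s := by
    refine (b.exteriorPower n).ext fun t => ?_
    rw [LinearMap.comp_apply, basis_apply, map_ιMulti_family_of_apply_eq_smul hf,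
      ← basis_apply, map_smul, LinearMap.smul_apply, Basis.coord_apply, Basis.repr_self,
      Finsupp.single_apply, smul_eq_mul, smul_eq_mul]
    split_ifs with h
    · rw [h]
    · simp
  exact LinearMap.congr_fun this x

lemma eq_zero_of_forall_map_reflection_eq_self [NoZeroDivisors R] [CharZero R]
    (b : Basis I R M) (hn : n ≠ 0) (x : ⋀[R]^n M)
    (hx : ∀ i, map n (b.reflection i).toLinearMap x = x) : x = 0 := by
  refine (b.exteriorPower n).ext_elem fun s => ?_
  obtain ⟨i, hi⟩ : s.val.Nonempty := by
    rw [← Finset.card_pos, s.prop]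
    omega
  have hsign : ∏ j ∈ s.val, (if j = i then -1 else 1 : R) = -1 := by
    rw [Finset.prod_ite_eq']
    simp [hi]
  have hcoord := basis_repr_map_of_apply_eq_smul b (b.reflection_apply_basis i) x s
  rw [hx, hsign, neg_one_mul, CharZero.eq_neg_self_iff] at hcoord
  simpa using hcoord

end exteriorPower

theorem invariant_exterior_power_eq_zero_general
    {V : Type*} [AddCommGroup V] [Module ℝ V] [FiniteDimensional ℝ V]
    (g : V →ₗ[ℝ] V →ₗ[ℝ] ℝ)
    (hsymm : ∀ v w, g v w = g w v)
    (p : ℕ) (hp : 1 ≤ p)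
    (ω : ExteriorAlgebra ℝ V) (hω : ω ∈ ⋀[ℝ]^p V)
    (hinv : ∀ A : V ≃ₗ[ℝ] V, (∀ v w, g (A v) (A w) = g v w) →
      ExteriorAlgebra.map A.toLinearMap ω = ω) :
    ω = 0 := by
  obtain ⟨b, hb⟩ :=
    LinearMap.BilinForm.exists_orthogonal_basis (B := g) ⟨fun v w => by simp [hsymm v w]⟩
  lift ω to ⋀[ℝ]^p V using hω
  suffices ω = 0 by simp [this]
  refine exteriorPower.eq_zero_of_forall_map_reflection_eq_self b (by omega) ω fun i => ?_
  apply Subtype.ext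
  rw [exteriorPower.coe_map, hinv _ (hb.apply_reflection_apply_reflection i)]

/-- Let `(V, g)` be a finite-dimensional real vector space
with a nondegenerate symmetric bilinear form, and `O(g)` its orthogonal group.
For every `p ≥ 1`, the only `O(g)`-invariant element of `Λ^p V` is zero. -/
theorem invariant_exterior_power_eq_zero
    {V : Type*} [AddCommGroup V] [Module ℝ V] [FiniteDimensional ℝ V]
    (g : V →ₗ[ℝ] V →ₗ[ℝ] ℝ)
    (hsymm : ∀ v w, g v w = g w v)
    (hnd : ∀ v, (∀ w, g v w = 0) → v = 0)
    (p : ℕ) (hp : 1 ≤ p)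
    (ω : ExteriorAlgebra ℝ V) (hω : ω ∈ ⋀[ℝ]^p V)
    (hinv : ∀ A : V ≃ₗ[ℝ] V, (∀ v w, g (A v) (A w) = g v w) →
      ExteriorAlgebra.map A.toLinearMap ω = ω) :
    ω = 0 :=
  invariant_exterior_power_eq_zero_general g hsymm p hp ω hω hinv
end

section
/- Let T ∈ Div^m (components T^{j₁...j_p; a₁b₁c₁d₁...c_md_m} with normal-block symmetries and the vanishing cyclic sum over (j_p, c_t, d_t)). Associate to a component the multigraph on vertex set {1,...,n} with one edge a_t–b_t and one edge c_t–d_t for each block t. If the vertex labeled by the index value j_p is connected (in this multigraph) to a cycle, then the component vanishes. -/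
/-!
The cyclic identity for the block `t` with `(c_t, d_t) = (w, v)`, combined with the symmetry
`c_t ↔ d_t`, gives `T(…, v; b) = -½ T(…, w; b')`, where `b'` replaces the edge `w – v` by a loop
at `v`: the index `j_p` can be moved across an edge at the price of turning it into a loop. Taking
`w = v` shows that a loop at `j_p` kills the component.

If `j_p` is connected to a cycle, then either it carries a loop, or it can be moved along an edge
so that its new position is still connected to a cycle: along the cycle if `j_p` lies on it (the
loop left behind is reachable along the rest of the cycle), otherwise along the first edge of a
walk to the cycle that never returns to `j_p`. Every move turns a non-loop edge into a loop, so
induction on the number of non-loop edges ends at a loop.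
-/

open scoped BigOperators

namespace DivTensor

/-- A block of four indices `(a, b, c, d)`. -/
abbrev Blk (n : ℕ) := Fin n × Fin n × Fin n × Fin n

variable {n m q : ℕ}

def swapAB (x : Blk n) : Blk n := (x.2.1, x.1, x.2.2)
def swapCD (x : Blk n) : Blk n := (x.1, x.2.1, x.2.2.2, x.2.2.1)
def swapPairs (x : Blk n) : Blk n := (x.2.2.1, x.2.2.2, x.1, x.2.1)
def rot1 (x : Blk n) : Blk n := (x.1, x.2.2.1, x.2.2.2, x.2.1)
def rot2 (x : Blk n) : Blk n := (x.1, x.2.2.2, x.2.1, x.2.2.1)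

/-- Membership (at the level of components) in
`Div^m ⊆ ⊗^{q+1} V ⊗ S^m N²` (`V = ℝⁿ`): each 4-index block has the symmetries
of a contravariant second-order normal tensor, the blocks can be permuted, and
the cyclic sum over the indices `(j_p, c_t, d_t)` (the last contravariant index
and the last two indices of any block) vanishes. -/
structure MemDiv (T : (Fin (q + 1) → Fin n) → (Fin m → Blk n) → ℝ) : Prop where
  symAB : ∀ J b t, T J (Function.update b t (swapAB (b t))) = T J b
  symCD : ∀ J b t, T J (Function.update b t (swapCD (b t))) = T J b
  symPairs : ∀ J b t, T J (Function.update b t (swapPairs (b t))) = T J b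
  normal : ∀ J b t, T J b + T J (Function.update b t (rot1 (b t)))
      + T J (Function.update b t (rot2 (b t))) = 0
  blocksComm : ∀ J b (σ : Equiv.Perm (Fin m)), T J (b ∘ σ) = T J b
  cyc : ∀ (J : Fin q → Fin n) (jp : Fin n) (b : Fin m → Blk n) (t : Fin m),
      T (Fin.snoc J jp) b
        + T (Fin.snoc J (b t).2.2.2)
            (Function.update b t ((b t).1, (b t).2.1, jp, (b t).2.2.1))
        + T (Fin.snoc J (b t).2.2.1)
            (Function.update b t ((b t).1, (b t).2.1, (b t).2.2.2, jp)) = 0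

end DivTensor

/-- A finite multigraph. -/
structure Multigraph where
  V : Type
  E : Type
  ends : E → Sym2 V

namespace Multigraph

variable (G : Multigraph)

def Adj (u v : G.V) : Prop := ∃ e : G.E, G.ends e = s(u, v)

def Reachable (u v : G.V) : Prop := Relation.ReflTransGen G.Adj u v

/-- A cycle: pairwise distinct edges and vertices, consecutive incidences
(cyclically).  A loop is a cycle of length 1 and a pair of parallel edges a
cycle of length 2. -/
def IsCycle {m : ℕ} (es : Fin (m + 1) → G.E) (vs : Fin (m + 1) → G.V) : Prop :=
  Function.Injective es ∧ Function.Injective vs ∧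
    ∀ i : Fin (m + 1), G.ends (es i) = s(vs i, vs (i + 1))

/-- A vertex is connected to a cycle if its component contains a cycle. -/
def ConnectedToCycle (v : G.V) : Prop :=
  ∃ (m : ℕ) (es : Fin (m + 1) → G.E) (vs : Fin (m + 1) → G.V) (i : Fin (m + 1)),
    G.IsCycle es vs ∧ G.Reachable v (vs i)

end Multigraph

namespace DivTensor

/-- The multigraph associated to a component of an element of `Div^m`:
the vertices are the index values `1, …, n` and each block `(a, b, c, d)`
contributes an edge `a – b` and an edge `c – d`. -/
def graphOf {n m : ℕ} (b : Fin m → Blk n) : Multigraph where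
  V := Fin n
  E := Fin m × Bool
  ends := fun e =>
    if e.2 then s((b e.1).1, (b e.1).2.1) else s((b e.1).2.2.1, (b e.1).2.2.2)

end DivTensor

theorem Relation.ReflTransGen.eq_or_exists_avoiding {α : Type*} {r : α → α → Prop} {a b : α}
    (h : Relation.ReflTransGen r a b) :
    a = b ∨ ∃ c, r a c ∧ c ≠ a ∧
      Relation.ReflTransGen (fun x y => r x y ∧ x ≠ a ∧ y ≠ a) c b := by
  induction h with
  | refl => exact Or.inl rfl
  | @tail x y _ hxy ih =>
    by_cases hya : y = a
    · exact Or.inl hya.symm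
    by_cases hxa : x = a
    · subst hxa
      exact Or.inr ⟨y, hxy, hya, .refl⟩
    rcases ih with rfl | ⟨c, hac, hca, hcx⟩
    · exact absurd rfl hxa
    · exact Or.inr ⟨c, hac, hca, hcx.tail ⟨hxy, hxa, hya⟩⟩

namespace Multigraph

variable {G : Multigraph}

theorem isCycle_const {e : G.E} {x : G.V} (h : G.ends e = s(x, x)) :
    G.IsCycle (m := 0) (fun _ => e) (fun _ => x) :=
  ⟨fun _ _ _ => Subsingleton.elim (α := Fin 1) _ _,
    fun _ _ _ => Subsingleton.elim (α := Fin 1) _ _, fun _ => h⟩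

open Fin.NatCast in
theorem IsCycle.reflTransGen_succ_self {N : ℕ} {es : Fin (N + 1) → G.E}
    {vs : Fin (N + 1) → G.V} (hc : G.IsCycle es vs) (j : Fin (N + 1)) :
    Relation.ReflTransGen (fun x y => ∃ e, e ≠ es j ∧ G.ends e = s(x, y))
      (vs (j + 1)) (vs j) := by
  have arc : ∀ k : ℕ, k ≤ N →
      Relation.ReflTransGen (fun x y => ∃ e, e ≠ es j ∧ G.ends e = s(x, y))
        (vs (j + 1)) (vs (j + ((1 + k : ℕ) : Fin (N + 1)))) := by
    intro k hk
    induction k with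
    | zero => simpa using .refl
    | succ k ih =>
      refine (ih (by omega)).tail ⟨es (j + ((1 + k : ℕ) : Fin (N + 1))), fun h => ?_, ?_⟩
      · have h0 : ((1 + k : ℕ) : Fin (N + 1)) = 0 := add_eq_left.mp (hc.1 h)
        have := Nat.le_of_dvd (by omega) (Fin.natCast_eq_zero.mp h0)
        omega
      · rw [hc.2.2, show 1 + (k + 1) = (1 + k) + 1 from rfl, Nat.cast_succ, add_assoc]
  simpa [add_comm 1 N] using arc N le_rfl

end Multigraph

namespace DivTensor

variable {n m q : ℕ}

def setLoop (b : Fin m → Blk n) (e : Fin m × Bool) (x : Fin n) : Fin m → Blk n :=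
  Function.update b e.1 (if e.2 then (x, x, (b e.1).2.2) else ((b e.1).1, (b e.1).2.1, x, x))

theorem ends_setLoop_self (b : Fin m → Blk n) (e : Fin m × Bool) (x : Fin n) :
    (graphOf (setLoop b e x)).ends e = s(x, x) := by
  obtain ⟨t, _ | _⟩ := e <;> simp [setLoop, graphOf]

theorem ends_setLoop_of_ne (b : Fin m → Blk n) {e e' : Fin m × Bool} (x : Fin n) (h : e' ≠ e) :
    (graphOf (setLoop b e x)).ends e' = (graphOf b).ends e' := by
  obtain ⟨t, slot⟩ := e
  obtain ⟨t', slot'⟩ := e'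
  by_cases ht : t' = t
  · subst ht
    obtain rfl : slot' = !slot := by cases slot <;> cases slot' <;> simp_all
    cases slot <;> simp [setLoop, graphOf]
  · simp [setLoop, graphOf, Function.update_of_ne ht]

theorem setLoop_eq_self {b : Fin m → Blk n} {e : Fin m × Bool} {x : Fin n}
    (h : (graphOf b).ends e = s(x, x)) : setLoop b e x = b := by
  obtain ⟨t, _ | _⟩ := e <;>
  · simp only [graphOf, Bool.false_eq_true, ↓reduceIte, Sym2.eq_iff, or_self] at h
    simp [setLoop, Function.update_eq_self_iff, Prod.ext_iff, h.1, h.2]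

theorem isCycle_setLoop {b : Fin m → Blk n} {N : ℕ} {es : Fin (N + 1) → Fin m × Bool}
    {vs : Fin (N + 1) → Fin n} (hc : (graphOf b).IsCycle es vs) {e : Fin m × Bool}
    {v w : Fin n} (he : (graphOf b).ends e = s(v, w)) (hv : v ∉ Set.range vs) (x : Fin n) :
    (graphOf (setLoop b e x)).IsCycle es vs := by
  refine ⟨hc.1, hc.2.1, fun i => ?_⟩
  have hne : es i ≠ e := by
    rintro rfl
    rcases Sym2.eq_iff.mp ((hc.2.2 i).symm.trans he) with ⟨h, -⟩ | ⟨-, h⟩ <;> exact hv ⟨_, h⟩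
  exact (ends_setLoop_of_ne b x hne).trans (hc.2.2 i)

theorem reachable_setLoop_succ_self {b : Fin m → Blk n} {N : ℕ}
    {es : Fin (N + 1) → Fin m × Bool} {vs : Fin (N + 1) → Fin n}
    (hc : (graphOf b).IsCycle es vs) (j : Fin (N + 1)) (x : Fin n) :
    (graphOf (setLoop b (es j) x)).Reachable (vs (j + 1)) (vs j) :=
  Relation.ReflTransGen.mono (fun _ _ ⟨e, hne, he⟩ => ⟨e, (ends_setLoop_of_ne b x hne).trans he⟩)
    _ _ (hc.reflTransGen_succ_self j)

theorem exists_loop_or_connectedToCycle_setLoop {b : Fin m → Blk n} {v : Fin n}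
    (h : (graphOf b).ConnectedToCycle v) :
    (∃ e, (graphOf b).ends e = s(v, v)) ∨
      ∃ e w, (graphOf b).ends e = s(v, w) ∧ v ≠ w ∧
        (graphOf (setLoop b e v)).ConnectedToCycle w := by
  obtain ⟨N, es, vs, i, hc, hr⟩ := h
  by_cases hv : v ∈ Set.range vs
  · obtain ⟨j, rfl⟩ := hv
    by_cases hloop : vs (j + 1) = vs j
    · exact Or.inl ⟨es j, (hc.2.2 j).trans (congrArg (s(vs j, ·)) hloop)⟩
    · exact Or.inr ⟨es j, vs (j + 1), hc.2.2 j, Ne.symm hloop, 0, fun _ => es j, fun _ => vs j,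
        0, Multigraph.isCycle_const (ends_setLoop_self b _ _),
        reachable_setLoop_succ_self hc j _⟩
  · rcases hr.eq_or_exists_avoiding with rfl | ⟨w, ⟨e, he⟩, hwv, hw⟩
    · exact absurd ⟨i, rfl⟩ hv
    refine Or.inr ⟨e, w, he, hwv.symm, N, es, vs, i, isCycle_setLoop hc he hv v,
      Relation.ReflTransGen.mono (fun x y ⟨⟨e', he'⟩, hxv, hyv⟩ => ⟨e', ?_⟩) _ _ hw⟩
    have hne : e' ≠ e := by
      rintro rfl
      rcases Sym2.eq_iff.mp (he'.symm.trans he) with ⟨h, -⟩ | ⟨-, h⟩ <;> contradiction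
    exact (ends_setLoop_of_ne b v hne).trans he'

noncomputable def numNonLoops (b : Fin m → Blk n) : ℕ :=
  {e : Fin m × Bool | ¬ ((graphOf b).ends e).IsDiag}.ncard

theorem numNonLoops_setLoop_lt {b : Fin m → Blk n} {e : Fin m × Bool}
    (he : ¬ ((graphOf b).ends e).IsDiag) (x : Fin n) :
    numNonLoops (setLoop b e x) < numNonLoops b := by
  refine Set.ncard_lt_ncard (Set.ssubset_iff_of_subset ?_ |>.mpr ⟨e, he, ?_⟩)
  · intro e' (he' : ¬ _)
    have hne : e' ≠ e := by
      rintro rfl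
      exact he' (ends_setLoop_self b e' x ▸ Sym2.mk_isDiag_iff.mpr rfl)
    rwa [ends_setLoop_of_ne b x hne] at he'
  · exact not_not_intro (ends_setLoop_self b e x ▸ Sym2.mk_isDiag_iff.mpr rfl)

section Tensor

variable {T : (Fin (q + 1) → Fin n) → (Fin m → Blk n) → ℝ}

theorem apply_update_swapPairs (hT : MemDiv T) (K : Fin (q + 1) → Fin n)
    (b : Fin m → Blk n) (t : Fin m) (x : Blk n) :
    T K (Function.update b t (swapPairs x)) = T K (Function.update b t x) := by
  simpa using hT.symPairs K (Function.update b t x) t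

theorem apply_snoc_eq_neg_half_mul_of_cd (hT : MemDiv T) (J : Fin q → Fin n)
    (b : Fin m → Blk n) (t : Fin m) {v w : Fin n}
    (h : s((b t).2.2.1, (b t).2.2.2) = s(v, w)) :
    T (Fin.snoc J v) b =
      -(1 / 2) * T (Fin.snoc J w) (Function.update b t ((b t).1, (b t).2.1, v, v)) := by
  have hcyc := hT.cyc J v b t
  have hsym := hT.symCD (Fin.snoc J v) b t
  simp only [swapCD] at hsym
  rcases Sym2.eq_iff.mp h with ⟨hc, hd⟩ | ⟨hc, hd⟩ <;> rw [hc, hd] at hcyc hsym <;> linarith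

theorem apply_snoc_eq_neg_half_mul (hT : MemDiv T) (J : Fin q → Fin n)
    {b : Fin m → Blk n} {e : Fin m × Bool} {v w : Fin n} (h : (graphOf b).ends e = s(v, w)) :
    T (Fin.snoc J v) b = -(1 / 2) * T (Fin.snoc J w) (setLoop b e v) := by
  obtain ⟨t, _ | _⟩ := e
  · exact apply_snoc_eq_neg_half_mul_of_cd hT J b t h
  · have hswap := apply_snoc_eq_neg_half_mul_of_cd hT J (Function.update b t (swapPairs (b t))) t
      (by simpa [swapPairs] using (show s((b t).1, (b t).2.1) = s(v, w) from h))
    rw [hT.symPairs] at hswap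
    rw [hswap]
    simpa [setLoop, swapPairs] using apply_update_swapPairs hT (Fin.snoc J w) b t (v, v, (b t).2.2)

theorem apply_snoc_eq_zero_of_loop (hT : MemDiv T) (J : Fin q → Fin n)
    {b : Fin m → Blk n} {e : Fin m × Bool} {v : Fin n} (h : (graphOf b).ends e = s(v, v)) :
    T (Fin.snoc J v) b = 0 := by
  have := apply_snoc_eq_neg_half_mul hT J h
  rw [setLoop_eq_self h] at this
  linarith

end Tensor

/-- If, in the multigraph associated to a component of an
element of `Div^m`, the vertex labelled by the last contravariant index `j_p`
is connected to a cycle, then the component vanishes. -/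
theorem component_connectedToCycle_eq_zero {n m q : ℕ}
    (T : (Fin (q + 1) → Fin n) → (Fin m → Blk n) → ℝ) (hT : MemDiv T) :
    ∀ (J : Fin q → Fin n) (jp : Fin n) (b : Fin m → Blk n),
      (graphOf b).ConnectedToCycle jp → T (Fin.snoc J jp) b = 0 := by
  intro J jp b h
  induction hb : numNonLoops b using Nat.strong_induction_on generalizing b jp with
  | _ k ih =>
    rcases exists_loop_or_connectedToCycle_setLoop h with ⟨e, he⟩ | ⟨e, w, he, hne, hw⟩
    · exact apply_snoc_eq_zero_of_loop hT J he
    · have hlt := numNonLoops_setLoop_lt (he ▸ Sym2.mk_isDiag_iff.not.mpr hne) jp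
      rw [apply_snoc_eq_neg_half_mul hT J he, ih _ (hb ▸ hlt) w _ hw rfl, mul_zero]

end DivTensor
end

section
/- For m ≥ n/2, the space Div^m ⊂ ⊗^p ℝⁿ ⊗ S^m N² of tensors satisfying the divergence symmetries is zero: every component of every element vanishes. -/
open scoped BigOperators

/-!
Read the `2m` index pairs `(a_t, b_t)`, `(c_t, d_t)` of a component as the edges of a multigraph
on the `n` index values, and its last contravariant index as a marked vertex `x`. A loop at `x`
kills the component, and the cyclic identity at an edge `{v, x}` together with the pair symmetry
gives `2 T(x; G) = -T(v; G')`, where `G'` turns that edge into a loop at `x`. Moving the marked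
vertex along a trail into a circuit thus shows `T(x; G) = 0` whenever a cycle can be reached from
`x`. Otherwise, since `G` has at least as many edges as vertices, an induction removing leaves finds
an edge `{c, d}` such that cycles can be reached from both `c` and `d` without it, and the cyclic
identity at that edge writes `T(x; G)` as a sum of two components of the first kind.
-/

/- `E : S → V × V` is a multigraph on `V` with edge set `S`, loops and parallel edges allowed;
`(s, true)` and `(s, false)` traverse the edge `s` in its two directions. -/
namespace Multigraph

variable {V S : Type*} (E : S → V × V)

def src : S × Bool → V
  | (s, true) => (E s).1
  | (s, false) => (E s).2

def dst : S × Bool → V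
  | (s, true) => (E s).2
  | (s, false) => (E s).1

def IsWalk (A : Finset S) : V → List (S × Bool) → V → Prop
  | x, [], y => x = y
  | x, st :: l, y => st.1 ∈ A ∧ src E st = x ∧ IsWalk A (dst E st) l y

def edges (l : List (S × Bool)) : List S := l.map Prod.fst

def verts (x : V) (l : List (S × Bool)) : List V := x :: l.map (dst E)

def ReachesCycle (A : Finset S) (x : V) : Prop :=
  ∃ p y l, IsWalk E A x p y ∧ IsWalk E A y l y ∧ l ≠ [] ∧ (edges (p ++ l)).Nodup

def HasRemovableEdge [DecidableEq S] (A : Finset S) : Prop :=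
  ∃ s ∈ A, ReachesCycle E (A.erase s) (E s).1 ∧ ReachesCycle E (A.erase s) (E s).2

def support [DecidableEq V] (A : Finset S) : Finset V :=
  A.biUnion fun s => {(E s).1, (E s).2}

variable {E} {A B : Finset S} {x y z : V}

@[simp] lemma isWalk_nil : IsWalk E A x [] y ↔ x = y := Iff.rfl

@[simp] lemma isWalk_cons {st : S × Bool} {l : List (S × Bool)} :
    IsWalk E A x (st :: l) y ↔ st.1 ∈ A ∧ src E st = x ∧ IsWalk E A (dst E st) l y := Iff.rfl

@[simp] lemma edges_nil : edges ([] : List (S × Bool)) = [] := rfl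

@[simp] lemma edges_cons (st : S × Bool) (l : List (S × Bool)) :
    edges (st :: l) = st.1 :: edges l := rfl

@[simp] lemma edges_append (l₁ l₂ : List (S × Bool)) :
    edges (l₁ ++ l₂) = edges l₁ ++ edges l₂ :=
  List.map_append

@[simp] lemma verts_nil : verts E x [] = [x] := rfl

@[simp] lemma verts_cons (st : S × Bool) (l : List (S × Bool)) :
    verts E x (st :: l) = x :: verts E (dst E st) l := rfl

lemma verts_append (l₁ l₂ : List (S × Bool)) :
    verts E x (l₁ ++ l₂) = verts E x l₁ ++ l₂.map (dst E) := by
  simp [verts]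

lemma isWalk_append {l₁ l₂ : List (S × Bool)} :
    IsWalk E A x (l₁ ++ l₂) y ↔ ∃ z, IsWalk E A x l₁ z ∧ IsWalk E A z l₂ y := by
  induction l₁ generalizing x with
  | nil => simp
  | cons st l ih => simp [ih, and_assoc]

lemma src_dst_cases (st : S × Bool) :
    src E st = (E st.1).1 ∧ dst E st = (E st.1).2 ∨
      src E st = (E st.1).2 ∧ dst E st = (E st.1).1 := by
  rcases st with ⟨s, _ | _⟩ <;> simp [src, dst]

lemma src_congr {E' : S → V × V} {st : S × Bool} (h : E' st.1 = E st.1) :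
    src E' st = src E st := by
  rcases st with ⟨s, _ | _⟩ <;> simp [src, h]

lemma exists_src_eq {s : S} (h : z = (E s).1 ∨ z = (E s).2) :
    ∃ st : S × Bool, st.1 = s ∧ src E st = z := by
  rcases h with rfl | rfl
  exacts [⟨(s, true), rfl, rfl⟩, ⟨(s, false), rfl, rfl⟩]

namespace IsWalk

lemma restrict {A' : Finset S} {l : List (S × Bool)} (h : IsWalk E A x l y)
    (hA : ∀ s ∈ edges l, s ∈ A') : IsWalk E A' x l y := by
  induction l generalizing x with
  | nil => exact h
  | cons st l ih => exact ⟨hA _ (by simp), h.2.1, ih h.2.2 fun s hs => hA s (by simp [hs])⟩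

lemma congr {E' : S → V × V} {l : List (S × Bool)} (hE : ∀ s ∈ edges l, E' s = E s)
    (h : IsWalk E A x l y) : IsWalk E' A x l y := by
  induction l generalizing x with
  | nil => exact h
  | cons st l ih =>
    obtain ⟨hA, rfl, h⟩ := h
    have hst : E' st.1 = E st.1 := hE _ (by simp)
    refine ⟨hA, src_congr hst, ?_⟩
    convert ih (fun s hs => hE s (by simp [hs])) h using 1
    rcases st with ⟨s, _ | _⟩ <;> simp_all [dst]

lemma edges_subset {l : List (S × Bool)} (h : IsWalk E A x l y) {s : S} (hs : s ∈ edges l) :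
    s ∈ A := by
  induction l generalizing x with
  | nil => simp at hs
  | cons st l ih =>
    rcases List.mem_cons.1 hs with rfl | hs
    exacts [h.1, ih h.2.2 hs]

lemma mem_verts_of_mem_edges {l : List (S × Bool)} (h : IsWalk E A x l y) {s : S}
    (hs : s ∈ edges l) : (E s).1 ∈ verts E x l ∧ (E s).2 ∈ verts E x l := by
  induction l generalizing x with
  | nil => simp at hs
  | cons st l ih =>
    obtain ⟨-, rfl, h⟩ := h
    rcases List.mem_cons.1 hs with rfl | hs
    · have hd : dst E st ∈ verts E (dst E st) l := List.mem_cons_self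
      rcases src_dst_cases (E := E) st with ⟨h₁, h₂⟩ | ⟨h₁, h₂⟩ <;> rw [← h₁, ← h₂] <;>
        simp [hd]
    · exact (ih h hs).imp (List.mem_cons_of_mem _) (List.mem_cons_of_mem _)

lemma src_mem_verts {l : List (S × Bool)} (h : IsWalk E A x l y) {st : S × Bool}
    (hs : st.1 ∈ edges l) : src E st ∈ verts E x l := by
  have := h.mem_verts_of_mem_edges hs
  rcases src_dst_cases (E := E) st with ⟨h₁, -⟩ | ⟨h₁, -⟩ <;> rw [h₁]
  exacts [this.1, this.2]

lemma exists_split {l : List (S × Bool)} (h : IsWalk E A x l y) (hz : z ∈ verts E x l) :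
    ∃ l₁ l₂, l = l₁ ++ l₂ ∧ IsWalk E A x l₁ z ∧ IsWalk E A z l₂ y := by
  induction l generalizing x with
  | nil =>
    obtain rfl : z = x := by simpa using hz
    exact ⟨[], [], rfl, rfl, h⟩
  | cons st l ih =>
    rcases List.mem_cons.1 hz with rfl | hz
    · exact ⟨[], st :: l, rfl, rfl, h⟩
    · obtain ⟨l₁, l₂, rfl, h₁, h₂⟩ := ih h.2.2 hz
      exact ⟨st :: l₁, l₂, rfl, ⟨h.1, h.2.1, h₁⟩, h₂⟩

lemma edges_nodup {l : List (S × Bool)} (h : IsWalk E A x l y) (hnd : (verts E x l).Nodup) :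
    (edges l).Nodup := by
  induction l generalizing x with
  | nil => simp
  | cons st l ih =>
    obtain ⟨-, rfl, h⟩ := h
    rw [verts_cons, List.nodup_cons] at hnd
    exact List.nodup_cons.2 ⟨fun hs => hnd.1 (h.src_mem_verts hs), ih h hnd.2⟩

lemma reachesCycle_of_dst_mem {l : List (S × Bool)} (hl : IsWalk E A x l z)
    (hnd : (edges l).Nodup) {st : S × Bool} (hst : st.1 ∈ A) (hnew : st.1 ∉ edges l)
    (hsrc : src E st = z) (hdst : dst E st ∈ verts E x l) : ReachesCycle E A x := by
  obtain ⟨l₁, l₂, rfl, hl₁, hl₂⟩ := hl.exists_split hdst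
  refine ⟨l₁, _, l₂ ++ [st], hl₁, isWalk_append.2 ⟨z, hl₂, hst, hsrc, rfl⟩, by simp, ?_⟩
  rw [← List.append_assoc, edges_append]
  exact hnd.append (by simp) (by simpa using hnew)

end IsWalk

namespace ReachesCycle

lemma mono (hAB : A ⊆ B) (h : ReachesCycle E A x) : ReachesCycle E B x := by
  obtain ⟨p, y, l, hp, hl, hne, hnd⟩ := h
  exact ⟨p, y, l, hp.restrict fun s hs => hAB (hp.edges_subset hs),
    hl.restrict fun s hs => hAB (hl.edges_subset hs), hne, hnd⟩

lemma congr {E' : S → V × V} (hE : ∀ s ∈ A, E' s = E s) (h : ReachesCycle E A x) :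
    ReachesCycle E' A x := by
  obtain ⟨p, y, l, hp, hl, hne, hnd⟩ := h
  exact ⟨p, y, l, hp.congr fun s hs => hE s (hp.edges_subset hs),
    hl.congr fun s hs => hE s (hl.edges_subset hs), hne, hnd⟩

lemma cons {st : S × Bool} (hst : st.1 ∈ A) (h : ReachesCycle E A (dst E st)) :
    ReachesCycle E A (src E st) := by
  obtain ⟨p, y, l, hp, hl, hne, hnd⟩ := h
  by_cases hnew : st.1 ∈ edges (p ++ l)
  swap
  · exact ⟨st :: p, y, l, ⟨hst, rfl, hp⟩, hl, hne, List.nodup_cons.2 ⟨hnew, hnd⟩⟩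
  -- `st` was used already: cut the stem at its source, or rotate the circuit to start there
  have hmem : src E st ∈ verts E (dst E st) p ∨ src E st ∈ verts E y l := by
    have := (isWalk_append.2 ⟨y, hp, hl⟩).src_mem_verts hnew
    rw [verts_append, List.mem_append] at this
    exact this.imp_right (List.mem_cons_of_mem _)
  rcases hmem with hmem | hmem
  · obtain ⟨p₁, p₂, rfl, -, hp₂⟩ := hp.exists_split hmem
    exact ⟨p₂, y, l, hp₂, hl, hne, hnd.sublist (by simp)⟩
  · obtain ⟨l₁, l₂, rfl, hl₁, hl₂⟩ := hl.exists_split hmem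
    refine ⟨[], _, l₂ ++ l₁, rfl, isWalk_append.2 ⟨y, hl₂, hl₁⟩, by simpa [and_comm] using hne, ?_⟩
    have hperm : (edges ([] ++ (l₂ ++ l₁))).Perm (edges (l₁ ++ l₂)) := by
      simpa using List.perm_append_comm
    exact hperm.nodup_iff.2 (hnd.sublist (by simp))

lemma of_isWalk {l : List (S × Bool)} (hl : IsWalk E A x l y) (h : ReachesCycle E A y) :
    ReachesCycle E A x := by
  induction l generalizing x with
  | nil => exact (show x = y from hl) ▸ h
  | cons st l ih =>
    obtain ⟨hst, rfl, hl⟩ := hl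
    exact cons hst (ih hl)

lemma exists_cycle_edge [DecidableEq S] (h : ReachesCycle E A x) :
    ∃ st : S × Bool, st.1 ∈ A ∧ ∃ l, IsWalk E (A.erase st.1) (dst E st) l (src E st) := by
  obtain ⟨p, y, l, -, hl, hne, hnd⟩ := h
  obtain ⟨st, l, rfl⟩ := List.exists_cons_of_ne_nil hne
  obtain ⟨hst, rfl, hl⟩ := hl
  have hnew : st.1 ∉ edges l := by
    have := (List.nodup_append.1 (edges_append p _ ▸ hnd)).2.1
    rw [edges_cons] at this
    exact (List.nodup_cons.1 this).1
  exact ⟨st, hst, l,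
    hl.restrict fun s hs => Finset.mem_erase.2 ⟨fun h => hnew (h ▸ hs), hl.edges_subset hs⟩⟩

end ReachesCycle

section Removable

variable [DecidableEq S]

lemma HasRemovableEdge.of_erase {s : S} (h : HasRemovableEdge E (A.erase s)) :
    HasRemovableEdge E A := by
  obtain ⟨s', hs', h₁, h₂⟩ := h
  have hsub := Finset.erase_subset_erase s' (Finset.erase_subset s A)
  exact ⟨s', Finset.mem_of_mem_erase hs', h₁.mono hsub, h₂.mono hsub⟩

lemma hasRemovableEdge_of_cycle_edge {st : S × Bool} (hst : st.1 ∈ A) {l : List (S × Bool)}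
    (hl : IsWalk E (A.erase st.1) (dst E st) l (src E st))
    (h : ReachesCycle E (A.erase st.1) (src E st)) : HasRemovableEdge E A := by
  have hdst := h.of_isWalk hl
  rcases src_dst_cases (E := E) st with ⟨h₁, h₂⟩ | ⟨h₁, h₂⟩ <;> rw [h₁] at h <;> rw [h₂] at hdst
  exacts [⟨st.1, hst, h, hdst⟩, ⟨st.1, hst, hdst, h⟩]

end Removable

section Support

variable [DecidableEq V]

@[simp] lemma mem_support : z ∈ support E A ↔ ∃ s ∈ A, z = (E s).1 ∨ z = (E s).2 := by
  simp [support]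

lemma support_mono (hAB : A ⊆ B) : support E A ⊆ support E B :=
  Finset.biUnion_subset_biUnion_of_subset_left _ hAB

lemma src_mem_support {st : S × Bool} (hst : st.1 ∈ A) : src E st ∈ support E A := by
  rcases src_dst_cases (E := E) st with ⟨h, -⟩ | ⟨h, -⟩ <;>
    exact mem_support.2 ⟨st.1, hst, by simp [h]⟩

lemma dst_mem_support {st : S × Bool} (hst : st.1 ∈ A) : dst E st ∈ support E A := by
  rcases src_dst_cases (E := E) st with ⟨-, h⟩ | ⟨-, h⟩ <;>
    exact mem_support.2 ⟨st.1, hst, by simp [h]⟩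

variable [DecidableEq S]

/- A longest path from `x` ends at a leaf: another edge there would extend it or close a cycle. -/
theorem exists_leaf_of_path [Fintype V] (hx : ¬ ReachesCycle E B x) {l : List (S × Bool)} {z : V}
    (hl : IsWalk E B x l z) (hnd : (verts E x l).Nodup) (hne : l ≠ []) :
    ∃ s ∈ B, ∃ w ≠ x, w ∈ support E B ∧ w ∉ support E (B.erase s) := by
  by_cases hext : ∃ st : S × Bool, st.1 ∈ B ∧ st.1 ∉ edges l ∧ src E st = z
  · obtain ⟨st, hB, hnew, hsrc⟩ := hext
    by_cases hvis : dst E st ∈ verts E x l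
    · exact absurd (hl.reachesCycle_of_dst_mem (hl.edges_nodup hnd) hB hnew hsrc hvis) hx
    · have hl' : IsWalk E B x (l ++ [st]) (dst E st) := isWalk_append.2 ⟨z, hl, hB, hsrc, rfl⟩
      refine exists_leaf_of_path hx hl' ?_ (by simp)
      rw [verts_append]
      exact hnd.append (by simp) (by simpa using hvis)
  · push Not at hext
    obtain ⟨l₀, st, rfl⟩ := (List.eq_nil_or_concat' l).resolve_left hne
    obtain ⟨u, hl₀, hst, hsrc, rfl⟩ := isWalk_append.1 hl
    rw [verts_append, List.map_singleton] at hnd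
    have hz : dst E st ∉ verts E x l₀ := fun h => (List.nodup_append.1 hnd).2.2 _ h _ (by simp) rfl
    refine ⟨st.1, hst, dst E st, fun h => hz (h ▸ List.mem_cons_self), dst_mem_support hst, ?_⟩
    intro hzB
    obtain ⟨s', hs', hz'⟩ := mem_support.1 hzB
    obtain ⟨hne', hs'⟩ := Finset.mem_erase.1 hs'
    obtain ⟨st', rfl, hsrc'⟩ := exists_src_eq hz'
    have hmem : st'.1 ∈ edges (l₀ ++ [st]) := by
      by_contra h
      exact hext st' hs' h hsrc'
    simp only [edges_append, edges_cons, edges_nil, List.mem_append, List.mem_singleton,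
      hne', or_false] at hmem
    exact hz (hsrc' ▸ hl₀.src_mem_verts hmem)
termination_by Fintype.card V - l.length
decreasing_by
  have := hnd.length_le_card
  simp [verts] at this ⊢
  omega

theorem exists_leaf [Fintype V] (hx : ¬ ReachesCycle E B x) (hxB : x ∈ support E B) :
    ∃ s ∈ B, ∃ w ≠ x, w ∈ support E B ∧ w ∉ support E (B.erase s) := by
  obtain ⟨s, hs, hxs⟩ := mem_support.1 hxB
  obtain ⟨st, rfl, rfl⟩ := exists_src_eq hxs
  have hloop : dst E st ≠ src E st := fun h =>
    hx ((show IsWalk E B (src E st) [] (src E st) from rfl).reachesCycle_of_dst_mem (by simp) hs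
      (by simp) rfl (by simp [h]))
  exact exists_leaf_of_path hx (show IsWalk E B _ [st] _ from ⟨hs, rfl, rfl⟩)
    (by simpa using hloop.symm) (List.cons_ne_nil _ _)

theorem reachesCycle_or_hasRemovableEdge [Fintype V] (B : Finset S) (j : V)
    (h : (insert j (support E B)).card ≤ B.card) :
    ReachesCycle E B j ∨ HasRemovableEdge E B := by
  induction B using Finset.strongInduction generalizing j with
  | H B ih =>
  have leaf : ∀ x ∈ support E B, ¬ ReachesCycle E B x →
      (insert x (support E B)).card ≤ B.card → HasRemovableEdge E B := by
    intro x hxB hx hcard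
    obtain ⟨s, hs, w, hwx, hwB, hws⟩ := exists_leaf hx hxB
    have hlt : (insert x (support E (B.erase s))).card < (insert x (support E B)).card := by
      refine Finset.card_lt_card ((Finset.ssubset_iff_of_subset ?_).2 ⟨w, by simp [hwB], ?_⟩)
      · exact Finset.insert_subset_insert _ (support_mono (Finset.erase_subset _ _))
      · simp [hwx, hws]
    rcases ih _ (Finset.erase_ssubset hs) x (by rw [Finset.card_erase_of_mem hs]; omega) with
      hx' | hrem
    · exact absurd (hx'.mono (Finset.erase_subset _ _)) hx
    · exact hrem.of_erase
  by_cases hj : ReachesCycle E B j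
  · exact Or.inl hj
  refine Or.inr ?_
  by_cases hjB : j ∈ support E B
  · exact leaf j hjB hj h
  rw [Finset.card_insert_of_notMem hjB] at h
  obtain ⟨s₀, hs₀⟩ : B.Nonempty := Finset.card_pos.1 (by omega)
  have hz : (E s₀).1 ∈ support E B := mem_support.2 ⟨s₀, hs₀, Or.inl rfl⟩
  by_cases hzc : ReachesCycle E B (E s₀).1
  swap
  · exact leaf _ hz hzc (by rw [Finset.insert_eq_of_mem hz]; omega)
  -- `B` has more edges than vertices: delete an edge of a cycle and recurse at its source
  obtain ⟨st, hst, l, hl⟩ := hzc.exists_cycle_edge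
  have hsub : insert (src E st) (support E (B.erase st.1)) ⊆ support E B :=
    Finset.insert_subset (src_mem_support hst) (support_mono (Finset.erase_subset _ _))
  rcases ih _ (Finset.erase_ssubset hst) (src E st)
      (by have := Finset.card_le_card hsub; rw [Finset.card_erase_of_mem hst]; omega) with
    hsrc | hrem
  · exact hasRemovableEdge_of_cycle_edge hst hl hsrc
  · exact hrem.of_erase

end Support

end Multigraph

namespace DivTensor

open Multigraph Function

variable {V S M : Type*} [DecidableEq S] [AddCommGroup M]

/-- `F x P` models the component with last contravariant index `x` and index pairs `P`. -/
structure SatisfiesCyclicIdentity (F : V → (S → V × V) → M) : Prop where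
  swap : ∀ x P s (u v : V), F x (update P s (u, v)) = F x (update P s (v, u))
  cyclic : ∀ x P s, F x P + F (P s).2 (update P s (x, (P s).1))
    + F (P s).1 (update P s ((P s).2, x)) = 0

namespace SatisfiesCyclicIdentity

variable [IsAddTorsionFree M] {F : V → (S → V × V) → M} (hF : SatisfiesCyclicIdentity F)
include hF

lemma eq_zero_of_loop {P : S → V × V} {s : S} {x : V} (h : P s = (x, x)) : F x P = 0 := by
  have := hF.cyclic x P s
  simp only [h] at this
  rw [update_eq_self_iff.2 h.symm] at this
  have : (3 : ℕ) • F x P = 0 := by rwa [succ_nsmul, two_nsmul]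
  simpa using this

lemma eq_zero_of_move {P : S → V × V} {s : S} {v x : V} (h : P s = (v, x))
    (hv : F v (update P s (x, x)) = 0) : F x P = 0 := by
  have := hF.cyclic x P s
  simp only [h, hv, add_zero] at this
  rw [hF.swap, update_eq_self_iff.2 h.symm, ← two_nsmul] at this
  simpa using this

lemma eq_zero_of_step {P : S → V × V} {st : S × Bool}
    (h : F (dst P st) (update P st.1 (src P st, src P st)) = 0) : F (src P st) P = 0 := by
  obtain ⟨s, _ | _⟩ := st
  · exact hF.eq_zero_of_move rfl h
  · have hswap : F (P s).1 P = F (P s).1 (update P s ((P s).2, (P s).1)) := by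
      rw [← hF.swap]; simp
    exact hswap.trans (hF.eq_zero_of_move (update_self ..) (by rwa [update_idem]))

lemma eq_zero_of_trail {A : Finset S} {w : List (S × Bool)} {P : S → V × V} {x y : V}
    (hw : IsWalk P A x w y) (hnd : (edges w).Nodup)
    (hy : y ∈ w.map (src P) ∨ ∃ s ∉ edges w, P s = (y, y)) : F x P = 0 := by
  induction w generalizing P x with
  | nil =>
    obtain rfl : x = y := hw
    obtain ⟨s, -, hs⟩ := hy.resolve_left (by simp)
    exact hF.eq_zero_of_loop hs
  | cons st w ih =>
    obtain ⟨-, rfl, hw⟩ := hw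
    rw [edges_cons, List.nodup_cons] at hnd
    set P' := update P st.1 (src P st, src P st)
    have hP' : ∀ s ∈ edges w, P' s = P s := fun s hs =>
      update_of_ne (fun h : s = st.1 => hnd.1 (h ▸ hs)) ..
    refine hF.eq_zero_of_step (ih (hw.congr hP') hnd.2 ?_)
    have hsrc : w.map (src P') = w.map (src P) :=
      List.map_congr_left fun st' h' => src_congr (hP' _ (List.mem_map_of_mem h'))
    rw [hsrc]
    rcases hy with hy | ⟨s, hs, hloop⟩
    · rcases List.mem_cons.1 hy with rfl | hy
      · -- the step just taken left a loop at the vertex it left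
        exact Or.inr ⟨st.1, hnd.1, update_self ..⟩
      · exact Or.inl hy
    · refine Or.inr ⟨s, fun h => hs (List.mem_cons_of_mem _ h), ?_⟩
      rw [← hloop]
      exact update_of_ne (fun h => hs (by simp [h])) ..

lemma eq_zero_of_reachesCycle {A : Finset S} {P : S → V × V} {x : V}
    (h : ReachesCycle P A x) : F x P = 0 := by
  obtain ⟨p, y, l, hp, hl, hne, hnd⟩ := h
  obtain ⟨st, l, rfl⟩ := List.exists_cons_of_ne_nil hne
  refine hF.eq_zero_of_trail (isWalk_append.2 ⟨y, hp, hl⟩) hnd (Or.inl ?_)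
  exact List.mem_map.2 ⟨st, by simp, hl.2.1⟩

theorem eq_zero_of_card_le [Fintype V] [Fintype S] (hcard : Fintype.card V ≤ Fintype.card S)
    (x : V) (P : S → V × V) : F x P = 0 := by
  classical
  have hle : (insert x (support P Finset.univ)).card ≤ (Finset.univ : Finset S).card :=
    (Finset.card_le_univ _).trans (by simpa using hcard)
  obtain hx | ⟨s, -, h₁, h₂⟩ := reachesCycle_or_hasRemovableEdge Finset.univ x hle
  · exact hF.eq_zero_of_reachesCycle hx
  have hupd : ∀ p : V × V, ∀ s' ∈ Finset.univ.erase s, update P s p s' = P s' :=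
    fun p s' hs' => update_of_ne (Finset.ne_of_mem_erase hs') ..
  have := hF.cyclic x P s
  rwa [hF.eq_zero_of_reachesCycle (h₂.congr (hupd _)),
    hF.eq_zero_of_reachesCycle (h₁.congr (hupd _)), add_zero, add_zero] at this

end SatisfiesCyclicIdentity

variable {n m q : ℕ}

def ofPairs (P : Fin m × Bool → Fin n × Fin n) : Fin m → Blk n :=
  fun t => ((P (t, false)).1, (P (t, false)).2, P (t, true))

def pairs (b : Fin m → Blk n) : Fin m × Bool → Fin n × Fin n
  | (t, false) => ((b t).1, (b t).2.1)
  | (t, true) => ((b t).2.2.1, (b t).2.2.2)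

lemma ofPairs_pairs (b : Fin m → Blk n) : ofPairs (pairs b) = b := rfl

lemma ofPairs_update_false (P : Fin m × Bool → Fin n × Fin n) (t : Fin m) (p : Fin n × Fin n) :
    ofPairs (update P (t, false) p) = update (ofPairs P) t (p.1, p.2, P (t, true)) := by
  funext t'
  by_cases h : t' = t
  · subst h; simp [ofPairs]
  · simp [ofPairs, h]

lemma ofPairs_update_true (P : Fin m × Bool → Fin n × Fin n) (t : Fin m) (p : Fin n × Fin n) :
    ofPairs (update P (t, true) p) =
      update (ofPairs P) t ((P (t, false)).1, (P (t, false)).2, p) := by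
  funext t'
  by_cases h : t' = t
  · subst h; simp [ofPairs]
  · simp [ofPairs, h]

namespace MemDiv

variable {T : (Fin (q + 1) → Fin n) → (Fin m → Blk n) → ℝ} (hT : MemDiv T)
include hT

lemma update_swapAB (J : Fin (q + 1) → Fin n) (b : Fin m → Blk n) (t : Fin m) (x : Blk n) :
    T J (update b t (swapAB x)) = T J (update b t x) := by
  simpa using hT.symAB J (update b t x) t

lemma update_swapCD (J : Fin (q + 1) → Fin n) (b : Fin m → Blk n) (t : Fin m) (x : Blk n) :
    T J (update b t (swapCD x)) = T J (update b t x) := by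
  simpa using hT.symCD J (update b t x) t

lemma update_swapPairs (J : Fin (q + 1) → Fin n) (b : Fin m → Blk n) (t : Fin m) (x : Blk n) :
    T J (update b t (swapPairs x)) = T J (update b t x) := by
  simpa using hT.symPairs J (update b t x) t

theorem satisfiesCyclicIdentity (J : Fin q → Fin n) :
    SatisfiesCyclicIdentity fun x P => T (Fin.snoc J x) (ofPairs P) where
  swap x P s u v := by
    obtain ⟨t, _ | _⟩ := s
    · simp only [ofPairs_update_false]
      exact (hT.update_swapAB _ _ t _).symm
    · simp only [ofPairs_update_true]
      exact (hT.update_swapCD _ _ t _).symm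
  cyclic x P s := by
    obtain ⟨t, _ | _⟩ := s
    · -- swapping the two pairs of block `t` reduces this to the identity at `(c_t, d_t)`
      rw [ofPairs_update_false, ofPairs_update_false, ← hT.symPairs _ (ofPairs P) t,
        ← hT.update_swapPairs _ _ t (x, _, _), ← hT.update_swapPairs _ _ t ((P (t, false)).2, x, _)]
      simpa [swapPairs, ofPairs] using
        hT.cyc J x (update (ofPairs P) t (swapPairs (ofPairs P t))) t
    · simpa [ofPairs_update_true, ofPairs] using hT.cyc J x (ofPairs P) t

end MemDiv

/-- For `m ≥ n/2` (i.e. `n ≤ 2m`), the space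
`Div^m ⊆ ⊗^p ℝⁿ ⊗ S^m N²` is zero: every component of every element
vanishes. -/
theorem div_eq_zero_of_half_dim_le {n m q : ℕ} (hm : n ≤ 2 * m)
    (T : (Fin (q + 1) → Fin n) → (Fin m → Blk n) → ℝ) (hT : MemDiv T) :
    ∀ (J : Fin (q + 1) → Fin n) (b : Fin m → Blk n), T J b = 0 := by
  intro J b
  have hcard : Fintype.card (Fin n) ≤ Fintype.card (Fin m × Bool) := by
    simpa [mul_comm] using hm
  rw [← Fin.snoc_init_self J, ← ofPairs_pairs b]
  exact (hT.satisfiesCyclicIdentity (Fin.init J)).eq_zero_of_card_le hcard _ _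

end DivTensor
end
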